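/- arXiv:1607.04506 — 3 statements merged into one kernel-verified Lean document; each statement's English description precedes it below -/
import Mathlib

section
/- If A₀ and A₁ are co-c.e. hyperimmune subsets of ℕ, then A₀ ∪ A₁ is hyperimmune. -/
open Classical

/-- The characteristic function of a set of naturals, as a partial function. -/
noncomputable def CharFun (X : Set ℕ) : ℕ →. ℕ :=
  fun n => Part.some (if n ∈ X then 1 else 0)

/-- Partial recursiveness relative to an oracle `O`. -/
inductive RecIn (O : ℕ →. ℕ) : (ℕ →. ℕ) → Prop
  | oracle : RecIn O O
  | zero : RecIn O (fun _ => Part.some 0)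
  | succ : RecIn O (fun n => Part.some n.succ)
  | left : RecIn O (fun n => Part.some n.unpair.1)
  | right : RecIn O (fun n => Part.some n.unpair.2)
  | pair {f g} : RecIn O f → RecIn O g →
      RecIn O (fun n => Nat.pair <$> f n <*> g n)
  | comp {f g} : RecIn O f → RecIn O g →
      RecIn O (fun n => g n >>= f)
  | prec {f g} : RecIn O f → RecIn O g →
      RecIn O (Nat.unpaired fun a n =>
        n.rec (f a) fun y IH => do {let i ← IH; g (Nat.pair a (Nat.pair y i))})
  | rfind {f} : RecIn O f →
      RecIn O (fun a => Nat.rfind fun n => (fun m => decide (m = 0)) <$> f (Nat.pair a n))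

/-- A (typed) function is computable in oracle `O`. -/
def ComputableInOracle {α β : Type} [Primcodable α] [Primcodable β] (O : ℕ →. ℕ) (f : α → β) : Prop :=
  RecIn O (fun n => Part.some (Encodable.encode (Option.map f (Encodable.decode (α := α) n))))

/-- A set of naturals is computable in oracle `O`. -/
def SetComputableIn (O : ℕ →. ℕ) (X : Set ℕ) : Prop :=
  RecIn O (CharFun X)

/-- A (typed) predicate is computably enumerable in oracle `O`. -/
def CEIn {α : Type} [Primcodable α] (O : ℕ →. ℕ) (p : α → Prop) : Prop :=
  ∃ f : ℕ →. ℕ, RecIn O f ∧ ∀ a : α, (f (Encodable.encode a)).Dom ↔ p a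

/-- A (typed) predicate is computably enumerable. -/
def CEPred {α : Type} [Primcodable α] (p : α → Prop) : Prop :=
  ∃ f : α →. Unit, Partrec f ∧ ∀ a, (f a).Dom ↔ p a

/-- A set of naturals is co-c.e. -/
def CoCE (A : Set ℕ) : Prop := CEPred (fun n => n ∉ A)

/-- The members of an array are mutually disjoint. -/
def ArrayDisjoint (F : ℕ → Finset ℕ) : Prop :=
  ∀ i j, i ≠ j → Disjoint (F i) (F j)

/-- An array traces a set `A` if each of its members meets `A`. -/
def Traces (F : ℕ → Finset ℕ) (A : Set ℕ) : Prop :=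
  ∀ i, ∃ x ∈ F i, x ∈ A

/-- A set is hyperimmune if it is infinite and not traced by any computable array. -/
def Hyperimmune (A : Set ℕ) : Prop :=
  A.Infinite ∧ ∀ F : ℕ → Finset ℕ, Computable F → ArrayDisjoint F → ¬ Traces F A

/-- A set is hyperimmune relative to the oracle `O`. -/
def HyperimmuneIn (O : ℕ →. ℕ) (A : Set ℕ) : Prop :=
  A.Infinite ∧ ∀ F : ℕ → Finset ℕ, ComputableInOracle O F → ArrayDisjoint F → ¬ Traces F A

/-- A set is immune if it is infinite and has no infinite computable subset. -/
def Immune (A : Set ℕ) : Prop :=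
  A.Infinite ∧ ∀ W : Set ℕ, W.Infinite → ComputablePred (· ∈ W) → ¬ W ⊆ A

/-- A set is immune relative to the oracle `O`. -/
def ImmuneIn (O : ℕ →. ℕ) (A : Set ℕ) : Prop :=
  A.Infinite ∧ ∀ W : Set ℕ, W.Infinite → SetComputableIn O W → ¬ W ⊆ A

/-- The effective join of two sets of naturals. -/
def SetJoin (Y Z : Set ℕ) : Set ℕ :=
  {n | if n % 2 = 0 then n / 2 ∈ Y else n / 2 ∈ Z}

/-- `X` is Turing reducible to `Z`. -/
def TuringLE (X Z : Set ℕ) : Prop := SetComputableIn (CharFun Z) X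

/-!
If infinitely many members of the array `F` lie inside the c.e. set `ℕ \ A₀`, a computable
search finds infinitely many of them; they form a computable subarray tracing `A₁`. Otherwise,
from some index on every member meets `A₀`, and the tail of `F` traces `A₀`.
-/

open Nat.Partrec (Code)

namespace Denumerable

theorem sort_ofNat_finset (n : ℕ) :
    (ofNat (Finset ℕ) n).sort = raise' (ofNat (List ℕ) n) 0 := by
  have hid : (eqv ℕ).symm.toEmbedding = Function.Embedding.refl ℕ := by ext; rfl
  rw [ofNat_of_decode
      (b := (raise'Finset (ofNat (List ℕ) n) 0).map (eqv ℕ).symm.toEmbedding) rfl,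
    hid, Finset.map_refl]
  exact List.mergeSort_eq_self _ (raise'_sorted _ _).sortedLE.pairwise

end Denumerable

namespace Primrec

variable {α β : Type} [Primcodable α] [Primcodable β]

theorem list_all {f : α → List β} {q : α → β → Bool} (hf : Primrec f)
    (hq : Primrec₂ q) : Primrec fun a => (f a).all (q a) := by
  refine (list_foldr hf (const true)
    (Primrec.and.comp (hq.comp fst (fst.comp snd)) (snd.comp snd)).to₂).of_eq fun a => ?_
  induction f a <;> simp [*]

/-- `raise' l n` as a left fold, accumulating the next offset and the reversed output. -/
private def raiseStep (p : ℕ × List ℕ) (m : ℕ) : ℕ × List ℕ :=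
  (m + p.1 + 1, (m + p.1) :: p.2)

private theorem foldl_raiseStep (l : List ℕ) (n : ℕ) (acc : List ℕ) :
    (l.foldl raiseStep (n, acc)).2 = (Denumerable.raise' l n).reverse ++ acc := by
  induction l generalizing n acc with
  | nil => simp [Denumerable.raise']
  | cons m l ih => simp [Denumerable.raise', raiseStep, ih]

theorem denumerable_raise' : Primrec fun l : List ℕ => Denumerable.raise' l 0 := by
  have hstep : Primrec₂ raiseStep :=
    pair (succ.comp (nat_add.comp snd (fst.comp fst)))
      (list_cons.comp (nat_add.comp snd (fst.comp fst)) (snd.comp fst))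
  have hfold := list_foldl Primrec.id (const ((0 : ℕ), ([] : List ℕ)))
    (hstep.comp (fst.comp snd) (snd.comp snd)).to₂
  refine (list_reverse.comp (snd.comp hfold)).of_eq fun l => ?_
  simp [foldl_raiseStep]

theorem finset_sort : Primrec fun s : Finset ℕ => s.sort := by
  have h : Primrec fun n => (Denumerable.ofNat (Finset ℕ) n).sort :=
    (denumerable_raise'.comp (Primrec.ofNat (List ℕ))).of_eq fun n =>
      (Denumerable.sort_ofNat_finset n).symm
  exact (h.comp Primrec.encode).of_eq fun s => by rw [Denumerable.ofNat_encode]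

end Primrec

theorem Computable.iterate {α : Type} [Primcodable α] {f : α → α} (hf : Computable f)
    (a : α) : Computable fun n => f^[n] a :=
  (Computable.nat_rec Computable.id (Computable.const a) (hf.comp (snd.comp snd)).to₂).of_eq
    fun n => by induction n <;> simp_all [Function.iterate_succ_apply']

namespace CEPred

/-- `g a s` records whether an enumeration of `p` halts on `a` within `s` steps. -/
theorem exists_monotone_stages {α : Type} [Primcodable α] {p : α → Prop} (hp : CEPred p) :
    ∃ g : α → ℕ → Bool, Primrec₂ g ∧
      (∀ a s t, s ≤ t → g a s = true → g a t = true) ∧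
      ∀ a, p a ↔ ∃ s, g a s = true := by
  obtain ⟨f, hf, hdom⟩ := hp
  obtain ⟨c, hc⟩ := Code.exists_code.1 hf
  refine ⟨fun a s => (c.evaln s (Encodable.encode a)).isSome, ?_, ?_, fun a => ?_⟩
  · exact (Primrec.option_isSome.comp (Code.primrec_evaln.comp
      ((Primrec.snd.pair (Primrec.const c)).pair (Primrec.encode.comp Primrec.fst)))).to₂
  · intro a s t hst h
    obtain ⟨v, hv⟩ := Option.isSome_iff_exists.1 h
    exact Option.isSome_iff_exists.2 ⟨v, Code.evaln_mono hst hv⟩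
  · have hcode : (c.eval (Encodable.encode a)).Dom ↔ p a := by
      rw [hc]; simpa [Encodable.encodek] using hdom a
    rw [← hcode, Part.dom_iff_mem]
    simpa [Code.evaln_complete, Option.isSome_iff_exists] using exists_comm

theorem exists_stages_finset_forall {p : ℕ → Prop} (hp : CEPred p) :
    ∃ D : Finset ℕ → ℕ → Bool, Primrec₂ D ∧
      ∀ s, (∀ x ∈ s, p x) ↔ ∃ t, D s t = true := by
  obtain ⟨g, hg, hmono, hgp⟩ := hp.exists_monotone_stages
  refine ⟨fun s t => (s.sort (· ≤ ·)).all (g · t),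
    (Primrec.list_all (Primrec.finset_sort.comp Primrec.fst)
      (hg.comp Primrec.snd (Primrec.snd.comp Primrec.fst)).to₂).to₂,
    fun s => ⟨fun h => ?_, fun ⟨t, ht⟩ x hx => ?_⟩⟩
  · choose! stage hstage using fun x hx => (hgp x).1 (h x hx)
    obtain ⟨t, ht⟩ := (s.image stage).exists_le
    refine ⟨t, List.all_eq_true.2 fun x hx => ?_⟩
    rw [Finset.mem_sort] at hx
    exact hmono x _ _ (ht _ (Finset.mem_image_of_mem _ hx)) (hstage x hx)
  · exact (hgp x).2 ⟨t, List.all_eq_true.1 ht x ((Finset.mem_sort _).2 hx)⟩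

end CEPred

theorem exists_computable_strictMono_of_infinite {D : ℕ → ℕ → Bool} (hD : Computable₂ D)
    (hinf : {i | ∃ t, D i t = true}.Infinite) :
    ∃ f : ℕ → ℕ, Computable f ∧ StrictMono f ∧ ∀ k, ∃ t, D (f k) t = true := by
  have hwitness : ∀ n, ∃ k : ℕ, n < k.unpair.1 ∧ D k.unpair.1 k.unpair.2 = true := by
    intro n
    obtain ⟨i, ⟨t, ht⟩, hni⟩ := hinf.exists_gt n
    exact ⟨Nat.pair i t, by simpa [Nat.unpair_pair] using ⟨hni, ht⟩⟩
  have hsearch : ComputablePred fun q : ℕ × ℕ => q.1 < q.2.unpair.1 ∧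
      D q.2.unpair.1 q.2.unpair.2 = true := by
    have hlt : Primrec fun q : ℕ × ℕ => decide (q.1 < q.2.unpair.1) :=
      (Primrec.nat_lt.comp Primrec.fst (Primrec.fst.comp (Primrec.unpair.comp Primrec.snd))).decide
    have hDq : Computable fun q : ℕ × ℕ => D q.2.unpair.1 q.2.unpair.2 :=
      hD.comp (Computable.fst.comp (Computable.unpair.comp Computable.snd))
        (Computable.snd.comp (Computable.unpair.comp Computable.snd))
    exact Computable.computablePred
      ((Primrec.and.to_comp.comp hlt.to_comp hDq).of_eq fun q => by simp)
  set next := fun n => (Nat.find (hwitness n)).unpair.1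
  have hnext : Computable next :=
    Computable.fst.comp (Computable.unpair.comp (Computable.find hsearch hwitness))
  have hnext_spec : ∀ n, n < next n ∧ ∃ t, D (next n) t = true := fun n =>
    ⟨(Nat.find_spec (hwitness n)).1, _, (Nat.find_spec (hwitness n)).2⟩
  refine ⟨fun k => next^[k + 1] 0, hnext.iterate 0 |>.comp Computable.succ, ?_, fun k => ?_⟩
  · refine strictMono_nat_of_lt_succ fun k => ?_
    rw [Function.iterate_succ_apply' next (k + 1)]
    exact (hnext_spec _).1
  · simp only [Function.iterate_succ_apply']
    exact (hnext_spec _).2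

theorem ArrayDisjoint.comp {F : ℕ → Finset ℕ} (hF : ArrayDisjoint F) {g : ℕ → ℕ}
    (hg : Function.Injective g) : ArrayDisjoint (F ∘ g) :=
  fun _ _ hij => hF _ _ (hg.ne hij)

theorem union_of_coCE_hyperimmune_general (A₀ A₁ : Set ℕ) (h₀ : CoCE A₀)
    (hh₀ : Hyperimmune A₀) (hh₁ : Hyperimmune A₁) : Hyperimmune (A₀ ∪ A₁) := by
  refine ⟨hh₀.1.mono Set.subset_union_left, fun F hF hdisj htr => ?_⟩
  obtain ⟨D, hD, hDF⟩ := CEPred.exists_stages_finset_forall h₀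
  by_cases hinf : {i | ∀ x ∈ F i, x ∉ A₀}.Infinite
  · obtain ⟨f, hf, hmono, hfA₀⟩ := exists_computable_strictMono_of_infinite
      (hD.to_comp.comp (hF.comp Computable.fst) Computable.snd).to₂
      (by simpa only [hDF] using hinf)
    refine hh₁.2 (F ∘ f) (hF.comp hf) (hdisj.comp hmono.injective) fun k => ?_
    obtain ⟨x, hx, hxA⟩ := htr (f k)
    exact ⟨x, hx, hxA.resolve_left ((hDF _).2 (hfA₀ k) x hx)⟩
  · obtain ⟨N, hN⟩ := (Set.not_infinite.1 hinf).bddAbove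
    refine hh₀.2 (F ∘ (· + (N + 1))) (hF.comp (Primrec.nat_add.comp Primrec.id
      (Primrec.const _)).to_comp) (hdisj.comp (add_left_injective _)) fun k => ?_
    by_contra hmiss
    have hle : k + (N + 1) ≤ N := hN fun x hx hxA => hmiss ⟨x, hx, hxA⟩
    omega

/-- If A₀ and A₁ are co-c.e. hyperimmune sets, then so is A₀ ∪ A₁. -/
theorem union_of_coCE_hyperimmune (A₀ A₁ : Set ℕ) (h₀ : CoCE A₀) (h₁ : CoCE A₁)
    (hh₀ : Hyperimmune A₀) (hh₁ : Hyperimmune A₁) : Hyperimmune (A₀ ∪ A₁) :=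
  union_of_coCE_hyperimmune_general A₀ A₁ h₀ hh₀ hh₁
end

section
/- For every k ≥ 1, if A is a co-c.e. set admitting a computable k-enumeration, then A has an infinite computable subset. Consequently, a co-c.e. set is constant-bound immune if and only if it is immune. -/
open Classical

/-- `F` is a computable k-enumeration of `A`. -/
def KEnum (k : ℕ) (F : ℕ → Finset ℕ) (A : Set ℕ) : Prop :=
  Computable F ∧ (∀ i, (F i).card = k) ∧
  (∀ i, ∀ x ∈ F i, ∀ y ∈ F (i + 1), x < y) ∧
  (∀ i, ∃ x ∈ F i, x ∈ A)

/-- A set is constant-bound immune if it is infinite and admits no computable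
constant-bound enumeration. -/
def CBImmune (A : Set ℕ) : Prop :=
  A.Infinite ∧ ∀ (k : ℕ) (F : ℕ → Finset ℕ), ¬ KEnum k F A

/-!
Induction on the block size. If infinitely many blocks contain a non-element of `A`, then, the
complement of `A` being c.e., one can effectively find such blocks together with a stage at which
one of their elements is seen to leave `A`; deleting the elements seen to leave `A` gives blocks
of smaller size that still meet `A`. Otherwise cofinitely many blocks lie inside `A`, and their
union is an infinite computable subset of `A`, computable because the `i`-th block lies above
`i`. Conversely, an infinite computable subset of `A` listed in increasing order is a
`1`-enumeration of `A`.
-/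

section FinsetEncoding

open Denumerable Encodable

/- `Finset ℕ` is `Primcodable` through `Denumerable.finset`, which codes a finset by the gaps
`lower'` of its sorted list; decoding is `raise'`. -/

theorem Denumerable.ofNat_finset_nat (n : ℕ) :
    ofNat (Finset ℕ) n = raise'Finset (ofNat (List ℕ) n) 0 := by
  have h : (eqv ℕ).symm.toEmbedding = Function.Embedding.refl ℕ := rfl
  change Finset.map (eqv ℕ).symm.toEmbedding _ = _
  rw [h, Finset.map_refl]

theorem Primrec.raise' : Primrec₂ Denumerable.raise' := by
  let step : List ℕ × ℕ → ℕ → List ℕ × ℕ := fun p m => (p.1 ++ [m + p.2], m + p.2 + 1)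
  have hfold : ∀ l acc n, (l.foldl step (acc, n)).1 = acc ++ Denumerable.raise' l n := by
    intro l
    induction l with
    | nil => simp [Denumerable.raise']
    | cons m l ih => intro acc n; simp [step, Denumerable.raise', ih]
  have hstep : Primrec₂ fun (_ : List ℕ × ℕ) (q : (List ℕ × ℕ) × ℕ) => step q.1 q.2 := by
    have hsum : Primrec fun q : (List ℕ × ℕ) × ℕ => q.2 + q.1.2 :=
      Primrec.nat_add.comp Primrec.snd (Primrec.snd.comp Primrec.fst)
    exact (Primrec.pair (Primrec.list_concat.comp (Primrec.fst.comp Primrec.fst) hsum)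
      (Primrec.succ.comp hsum)).comp Primrec.snd
  refine (Primrec.fst.comp (Primrec.list_foldl Primrec.fst
    (Primrec.pair (Primrec.const []) Primrec.snd) hstep)).of_eq fun ⟨l, n⟩ => ?_
  simpa using hfold l [] n

theorem Primrec.nat_finset_sort : Primrec fun s : Finset ℕ => s.sort := by
  refine Primrec.ofNat_iff.2 ((Primrec.raise'.comp (Primrec.ofNat (List ℕ))
    (Primrec.const 0)).of_eq fun n => ?_)
  rw [ofNat_finset_nat]
  exact List.Perm.eq_of_sortedLE (raise'_sorted _ _).sortedLE (Finset.sortedLT_sort _).sortedLE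
    (Multiset.coe_eq_coe.1 (Finset.sort_eq (raise'Finset _ 0) _).symm)

theorem Primrec.nat_finset_singleton : Primrec fun n : ℕ => ({n} : Finset ℕ) := by
  refine ((Primrec.ofNat (Finset ℕ)).comp (Primrec.encode.comp
    (Primrec.list_cons.comp Primrec.id (Primrec.const [])))).of_eq fun n => ?_
  rw [ofNat_finset_nat, ofNat_encode]
  rfl

end FinsetEncoding

namespace ComputablePred

variable {α β : Type*} [Primcodable α] [Primcodable β]

protected theorem comp {p : β → Prop} {f : α → β} :
    ComputablePred p → Computable f → ComputablePred fun a => p (f a)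
  | ⟨_, hp⟩, hf => ⟨fun _ => inferInstance, hp.comp hf⟩

protected theorem and {p q : α → Prop} :
    ComputablePred p → ComputablePred q → ComputablePred fun a => p a ∧ q a
  | ⟨_, hp⟩, ⟨_, hq⟩ =>
    ⟨fun _ => inferInstance, (Primrec.and.to_comp.comp hp hq).of_eq fun a => by simp⟩

theorem exists_le {p : ℕ → ℕ → Prop} (hp : ComputablePred fun q : ℕ × ℕ => p q.1 q.2) :
    ComputablePred fun x => ∃ i ≤ x, p x i := by
  obtain ⟨f, hf, hpf⟩ := computable_iff.1 hp
  let search : ℕ → ℕ → Bool := fun x n => Nat.rec false (fun i found => found || f (x, i)) n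
  have hsearch : ∀ x n, search x n = true ↔ ∃ i < n, p x i := by
    intro x n
    induction n with
    | zero => simp [search]
    | succ n ih =>
      simp only [search, Bool.or_eq_true] at ih ⊢
      rw [ih, ← show p x n = (f (x, n) = true) from congrFun hpf (x, n),
        Nat.exists_lt_succ_right]
  have hc : Computable fun x => search x (x + 1) :=
    Computable.nat_rec Computable.succ (Computable.const false)
      ((Primrec.or.to_comp.comp (Computable.snd.comp Computable.snd)
        (hf.comp (Computable.fst.pair (Computable.fst.comp Computable.snd)))).to₂)
  refine computable_iff.2 ⟨_, hc, funext fun x => propext ?_⟩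
  simp only [hsearch, Nat.lt_succ_iff]

end ComputablePred

theorem CEPred.exists_primrec_stage {p : ℕ → Prop} (hp : CEPred p) :
    ∃ g : ℕ → ℕ → Bool, Primrec₂ g ∧ ∀ x, p x ↔ ∃ s, g x s = true := by
  obtain ⟨f, hf, hdom⟩ := hp
  obtain ⟨c, hc⟩ := Nat.Partrec.Code.exists_code.1 (Partrec.nat_iff.1
    (hf.map ((Computable.const 0).to₂ : Computable₂ fun (_ : ℕ) (_ : Unit) => 0)))
  refine ⟨fun x s => (c.evaln s x).isSome, ?_, fun x => ?_⟩
  · exact Primrec.option_isSome.comp (Nat.Partrec.Code.primrec_evaln.comp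
      (Primrec.pair (Primrec.pair Primrec.snd (Primrec.const c)) Primrec.fst))
  · have hdom' : p x ↔ (c.eval x).Dom := by rw [hc, ← hdom x]; rfl
    simp only [hdom', Option.isSome_iff_exists, Part.dom_iff_mem, Nat.Partrec.Code.evaln_complete]
    exact exists_comm

theorem exists_strictMono_computable_of_infinite {W : Set ℕ} (hW : W.Infinite)
    (hc : ComputablePred (· ∈ W)) : ∃ e : ℕ → ℕ, Computable e ∧ StrictMono e ∧ ∀ j, e j ∈ W := by
  have hnext : ∀ m, ∃ x, m < x ∧ x ∈ W := fun m => (hW.exists_gt m).imp fun _ h => h.symm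
  have hnext_comp : Computable fun m => Nat.find (hnext m) :=
    Computable.find (Primrec.nat_lt.computablePred.and (hc.comp Computable.snd)) hnext
  let e : ℕ → ℕ := fun j =>
    Nat.rec (motive := fun _ => ℕ) (Nat.find (hnext 0)) (fun _ x => Nat.find (hnext x)) j
  have he_succ : ∀ j, e (j + 1) = Nat.find (hnext (e j)) := fun _ => rfl
  refine ⟨e, ?_, strictMono_nat_of_lt_succ fun j => ?_, fun j => ?_⟩
  · exact Computable.nat_rec Computable.id (Computable.const _)
      ((hnext_comp.comp (Computable.snd.comp Computable.snd)).to₂)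
  · rw [he_succ]
    exact (Nat.find_spec (hnext (e j))).1
  · cases j with
    | zero => exact (Nat.find_spec (hnext 0)).2
    | succ j => rw [he_succ]; exact (Nat.find_spec (hnext (e j))).2

/-- A weakening of a computable `k`-enumeration that survives passing to subsequences and
shrinking the blocks: the `i`-th block has at most `k` elements, all of them at least `i`. -/
structure IsBoundedTrace (k : ℕ) (L : ℕ → List ℕ) (A : Set ℕ) : Prop where
  computable : Computable L
  length_le : ∀ i, (L i).length ≤ k
  le_of_mem : ∀ i, ∀ x ∈ L i, i ≤ x
  exists_mem : ∀ i, ∃ x ∈ L i, x ∈ A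

namespace IsBoundedTrace

variable {k : ℕ} {L : ℕ → List ℕ} {A : Set ℕ}

theorem shift (h : IsBoundedTrace k L A) (N : ℕ) : IsBoundedTrace k (fun i => L (N + i)) A where
  computable := h.computable.comp (Primrec.nat_add.comp (Primrec.const N) Primrec.id).to_comp
  length_le i := h.length_le (N + i)
  le_of_mem i x hx := (Nat.le_add_left i N).trans (h.le_of_mem (N + i) x hx)
  exists_mem i := h.exists_mem (N + i)

theorem computablePred_exists_mem (h : IsBoundedTrace k L A) :
    ComputablePred fun x => ∃ i, x ∈ L i := by
  have hmem : ComputablePred fun q : ℕ × ℕ => q.1 ∈ L q.2 :=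
    (((PrimrecRel.exists_mem_list Primrec.eq).computablePred).comp
      ((h.computable.comp Computable.snd).pair Computable.fst)).of_eq fun _ => by simp
  exact hmem.exists_le.of_eq fun x =>
    ⟨fun ⟨i, _, hi⟩ => ⟨i, hi⟩, fun ⟨i, hi⟩ => ⟨i, h.le_of_mem i x hi, hi⟩⟩

theorem infinite_setOf_exists_mem (h : IsBoundedTrace k L A) : {x | ∃ i, x ∈ L i}.Infinite := by
  refine Set.infinite_of_forall_exists_gt fun m => ?_
  obtain ⟨x, hx, -⟩ := h.exists_mem (m + 1)
  exact ⟨x, ⟨m + 1, hx⟩, h.le_of_mem (m + 1) x hx⟩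

theorem exists_computable_subset_of_forall_mem (h : IsBoundedTrace k L A)
    (hA : ∀ i, ∀ x ∈ L i, x ∈ A) :
    ∃ W : Set ℕ, W.Infinite ∧ ComputablePred (· ∈ W) ∧ W ⊆ A :=
  ⟨_, h.infinite_setOf_exists_mem, h.computablePred_exists_mem, fun x ⟨i, hx⟩ => hA i x hx⟩

theorem filter_confirmed (h : IsBoundedTrace (k + 1) L A) {g : ℕ → ℕ → Bool} (hg : Primrec₂ g)
    (hgA : ∀ x s, g x s = true → x ∉ A) {idx stage : ℕ → ℕ} (hidx : Computable idx)
    (hstage : Computable stage) (hle : ∀ j, j ≤ idx j)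
    (hconf : ∀ j, ∃ x ∈ L (idx j), g x (stage j) = true) :
    IsBoundedTrace k (fun j => (L (idx j)).filter fun x => g x (stage j) = false) A where
  computable := (PrimrecRel.listFilter (Primrec.eq.comp₂ hg (Primrec₂.const false))).to_comp.comp
    (h.computable.comp hidx) hstage
  length_le j := by
    have hlt : ((L (idx j)).filter fun x => g x (stage j) = false).length < (L (idx j)).length :=
      List.length_filter_lt_length_iff_exists.2
        ((hconf j).imp fun x ⟨hx, hgx⟩ => ⟨hx, by simp [hgx]⟩)
    have := h.length_le (idx j)
    omega
  le_of_mem j x hx := (hle j).trans (h.le_of_mem _ x (List.mem_filter.1 hx).1)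
  exists_mem j := by
    obtain ⟨x, hx, hxA⟩ := h.exists_mem (idx j)
    exact ⟨x, List.mem_filter.2 ⟨hx, by simpa using fun hgx => hgA x _ hgx hxA⟩, hxA⟩

theorem exists_shrink (h : IsBoundedTrace (k + 1) L A) (hA : CoCE A)
    (hbad : {i | ∃ x ∈ L i, x ∉ A}.Infinite) : ∃ L', IsBoundedTrace k L' A := by
  obtain ⟨g, hg, hgA⟩ := hA.exists_primrec_stage
  -- `q` encodes a block `i ≥ j` and a stage `s` by which some element of that block has left `A`.
  have hsearch : ∀ j, ∃ q : ℕ, j ≤ q.unpair.1 ∧ ∃ x ∈ L q.unpair.1, g x q.unpair.2 = true := by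
    intro j
    obtain ⟨i, ⟨x, hx, hxA⟩, hji⟩ := hbad.exists_gt j
    obtain ⟨s, hs⟩ := (hgA x).1 hxA
    exact ⟨Nat.pair i s, by simpa using ⟨hji.le, x, hx, hs⟩⟩
  have hfind : Computable fun j => Nat.find (hsearch j) := by
    have hq := Computable.unpair.comp (Computable.snd (α := ℕ) (β := ℕ))
    refine Computable.find (.and ?_ ?_) hsearch
    · exact Primrec.nat_le.computablePred.comp (Computable.fst.pair (Computable.fst.comp hq))
    · exact (PrimrecRel.exists_mem_list (Primrec.eq.comp₂ hg (Primrec₂.const true))).computablePred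
        |>.comp ((h.computable.comp (Computable.fst.comp hq)).pair (Computable.snd.comp hq))
  have hunpair := Computable.unpair.comp hfind
  exact ⟨_, h.filter_confirmed hg (fun x s hs => (hgA x).2 ⟨s, hs⟩) (Computable.fst.comp hunpair)
    (Computable.snd.comp hunpair) (fun j => (Nat.find_spec (hsearch j)).1)
    (fun j => (Nat.find_spec (hsearch j)).2)⟩

theorem exists_infinite_computable_subset (hA : CoCE A) (h : IsBoundedTrace k L A) :
    ∃ W : Set ℕ, W.Infinite ∧ ComputablePred (· ∈ W) ∧ W ⊆ A := by
  induction k generalizing L with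
  | zero =>
    obtain ⟨x, hx, -⟩ := h.exists_mem 0
    exact absurd (h.length_le 0) (List.length_pos_of_mem hx).not_ge
  | succ k ih =>
    by_cases hbad : {i | ∃ x ∈ L i, x ∉ A}.Infinite
    · obtain ⟨L', hL'⟩ := h.exists_shrink hA hbad
      exact ih hL'
    · obtain ⟨N, hN⟩ := (Set.not_infinite.1 hbad).bddAbove
      refine (h.shift (N + 1)).exists_computable_subset_of_forall_mem fun i x hx => ?_
      by_contra hxA
      have := hN ⟨x, hx, hxA⟩
      omega

end IsBoundedTrace

theorem KEnum.le_of_mem {k : ℕ} {F : ℕ → Finset ℕ} {A : Set ℕ} (h : KEnum k F A) :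
    ∀ i, ∀ x ∈ F i, i ≤ x
  | 0, _, _ => Nat.zero_le _
  | i + 1, x, hx => by
    obtain ⟨y, hy, -⟩ := h.2.2.2 i
    exact (h.le_of_mem i y hy).trans_lt (h.2.2.1 i y hy x hx)

theorem KEnum.isBoundedTrace {k : ℕ} {F : ℕ → Finset ℕ} {A : Set ℕ} (h : KEnum k F A) :
    IsBoundedTrace k (fun i => (F i).sort) A where
  computable := Primrec.nat_finset_sort.to_comp.comp h.1
  length_le i := by rw [Finset.length_sort, h.2.1 i]
  le_of_mem i x hx := h.le_of_mem i x ((Finset.mem_sort _).1 hx)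
  exists_mem i := by simpa only [Finset.mem_sort] using h.2.2.2 i

theorem CBImmune.immune {A : Set ℕ} (h : CBImmune A) : Immune A := by
  refine ⟨h.1, fun W hW hc hWA => ?_⟩
  obtain ⟨e, he, hmono, heW⟩ := exists_strictMono_computable_of_infinite hW hc
  refine h.2 1 (fun j => {e j}) ⟨Primrec.nat_finset_singleton.to_comp.comp he, fun _ => rfl, ?_, ?_⟩
  · simpa using fun i => hmono (Nat.lt_succ_self i)
  · exact fun i => ⟨e i, Finset.mem_singleton_self _, hWA (heW i)⟩

theorem Immune.cbImmune {A : Set ℕ} (hA : CoCE A) (h : Immune A) : CBImmune A := by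
  refine ⟨h.1, fun k F hF => ?_⟩
  obtain ⟨W, hW, hc, hWA⟩ := hF.isBoundedTrace.exists_infinite_computable_subset hA
  exact h.2 W hW hc hWA

/-- A co-c.e. set with a computable k-enumeration has an infinite computable subset;
consequently a co-c.e. set is c.b-immune iff it is immune. -/
theorem coCE_kEnum_computable_subset :
    (∀ (k : ℕ), 1 ≤ k → ∀ (A : Set ℕ) (F : ℕ → Finset ℕ), CoCE A → KEnum k F A →
      ∃ W : Set ℕ, W.Infinite ∧ ComputablePred (· ∈ W) ∧ W ⊆ A) ∧
    (∀ A : Set ℕ, CoCE A → (CBImmune A ↔ Immune A)) :=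
  ⟨fun _ _ _ _ hA hF => hF.isBoundedTrace.exists_infinite_computable_subset hA,
    fun _ hA => ⟨CBImmune.immune, Immune.cbImmune hA⟩⟩
end

section
/- Let g : [ℕ]² → 2 be a semi-transitive coloring and define h : [ℕ]² → 2 by h(x,y) = 0 (for x < y) iff there is a finite increasing sequence x = x₀ < … < x_l = y with g(xᵢ, xᵢ₊₁) = 0 for all i. Then h is a linear order coloring: h is transitive in color 0 (h(x,y)=0 and h(y,z)=0 imply h(x,z)=0) and, moreover, for x < y < z, if h(x,z) = 0 then h(x,y) = 0 or h(y,z) = 0 (equivalently, color 1 of h is transitive as well). -/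
/-- There is an increasing path from x to y all of whose edges have g-value v. -/
def IncrPath (g : ℕ → ℕ → Bool) (v : Bool) (x y : ℕ) : Prop :=
  ∃ (l : ℕ) (c : ℕ → ℕ), 0 < l ∧ c 0 = x ∧ c l = y ∧
    ∀ i < l, c i < c (i + 1) ∧ g (c i) (c (i + 1)) = v

lemma IncrPath.concat {g : ℕ → ℕ → Bool} {v : Bool} {x y z : ℕ}
    (h1 : IncrPath g v x y) (h2 : IncrPath g v y z) : IncrPath g v x z := by
  obtain ⟨l, c, hl, hc0, hcl, hc⟩ := h1
  obtain ⟨m, d, hm, hd0, hdm, hd⟩ := h2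
  refine ⟨l + m, fun i => if i ≤ l then c i else d (i - l), by omega, by simp [hc0], ?_, ?_⟩
  · have : ¬ (l + m ≤ l) := by omega
    simp only [this, if_neg]
    simpa using hdm
  · intro i hi
    rcases lt_trichotomy i l with h | h | h
    · rcases eq_or_lt_of_le (Nat.succ_le_of_lt h) with h' | h'
      · simp only [if_pos h.le, if_pos (le_of_eq h')]
        exact hc i h
      · simp only [if_pos h.le, if_pos (Nat.le_of_lt_succ (Nat.lt_succ_of_lt h'))]
        exact hc i h
    · subst h
      have h1 : ¬ (i + 1 ≤ i) := by omega
      simp only [if_pos le_rfl, if_neg h1]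
      have : i + 1 - i = 1 := by omega
      rw [this, hcl, ← hd0]
      exact hd 0 hm
    · have h1 : ¬ (i ≤ l) := by omega
      have h2 : ¬ (i + 1 ≤ l) := by omega
      simp only [if_neg h1, if_neg h2]
      have he : i + 1 - l = (i - l) + 1 := by omega
      rw [he]
      exact hd (i - l) (by omega)

/-- The 0-reachability coloring h derived from a semi-transitive coloring g is a
linear-order coloring: both colors of h are transitive. -/
theorem reachability_linearOrder_coloring (g h : ℕ → ℕ → Bool)
    (hsemi : ∀ x y z, x < y → y < z → g x y = true → g y z = true → g x z = true)
    (hh : ∀ x y, x < y → (h x y = false ↔ IncrPath g false x y)) :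
    (∀ x y z, x < y → y < z → h x y = false → h y z = false → h x z = false) ∧
    (∀ x y z, x < y → y < z → h x z = false → (h x y = false ∨ h y z = false)) := by
  constructor
  · intro x y z hxy hyz h1 h2
    exact (hh x z (hxy.trans hyz)).mpr
      (((hh x y hxy).mp h1).concat ((hh y z hyz).mp h2))
  · intro x y z hxy hyz hxz
    obtain ⟨l, c, hl, hc0, hcl, hc⟩ := (hh x z (hxy.trans hyz)).mp hxz
    have hex : ∃ j, y ≤ c j := ⟨l, by omega⟩
    classical
    set j := Nat.find hex with hjdef
    have hj : y ≤ c j := Nat.find_spec hex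
    have hjmin : ∀ k < j, c k < y := fun k hk => by
      have := Nat.find_min hex hk
      omega
    have hjpos : 0 < j := by
      rcases Nat.eq_zero_or_pos j with h0 | h0
      · exfalso; rw [h0] at hj; omega
      · exact h0
    have hjl : j ≤ l := Nat.find_min' hex (by omega)
    rcases eq_or_lt_of_le hj with heq | hlt
    · -- c j = y : prefix path gives h x y = false
      have hjl' : j < l := by
        rcases eq_or_lt_of_le hjl with h' | h'
        · exfalso; rw [h'] at heq; omega
        · exact h'
      left
      exact (hh x y hxy).mpr ⟨j, c, hjpos, hc0, heq.symm, fun i hi => hc i (by omega)⟩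
    · -- c (j-1) < y < c j
      set i := j - 1 with hidef
      have hij : i + 1 = j := by omega
      have hil : i < l := by omega
      have hciy : c i < y := hjmin i (by omega)
      have hedge := hc i hil
      by_cases hg1 : g (c i) y = true
      · -- then g y (c (i+1)) = false
        have hg2 : g y (c (i + 1)) = false := by
          by_contra h'
          have h'' : g y (c (i + 1)) = true := by
            cases hgv : g y (c (i + 1)) with
            | false => exact absurd hgv h'
            | true => rfl
          have := hsemi (c i) y (c (i + 1)) hciy (by rw [hij]; exact hlt) hg1 h''
          rw [this] at hedge
          exact absurd hedge.2 (by simp)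
        right
        refine (hh y z hyz).mpr ⟨1 + (l - j), fun k => if k = 0 then y else c (j + (k - 1)),
          by omega, by simp, ?_, ?_⟩
        · have h0 : ¬ (1 + (l - j) = 0) := by omega
          simp only [if_neg h0]
          have : j + (1 + (l - j) - 1) = l := by omega
          rw [this, hcl]
        · intro k hk
          rcases Nat.eq_zero_or_pos k with h0 | h0
          · subst h0
            simp only [if_pos rfl, if_neg (by omega : ¬ (0 + 1 = 0))]
            have : j + (0 + 1 - 1) = j := by omega
            rw [this, ← hij]
            exact ⟨by rw [hij]; exact hlt, hg2⟩
          · have h1 : ¬ (k = 0) := by omega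
            have h2 : ¬ (k + 1 = 0) := by omega
            simp only [if_neg h1, if_neg h2]
            have e1 : j + (k + 1 - 1) = (j + (k - 1)) + 1 := by omega
            rw [e1]
            exact hc (j + (k - 1)) (by omega)
      · -- g (c i) y = false : path x → c i → y
        have hg1' : g (c i) y = false := by
          cases hgv : g (c i) y with
          | false => rfl
          | true => exact absurd hgv hg1
        left
        refine (hh x y hxy).mpr ⟨i + 1, fun k => if k ≤ i then c k else y,
          by omega, by simp [hc0], ?_, ?_⟩
        · simp only [if_neg (by omega : ¬ (i + 1 ≤ i))]
        · intro k hk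
          rcases lt_or_eq_of_le (Nat.le_of_lt_succ hk) with h' | h'
          · simp only [if_pos h'.le, if_pos (Nat.succ_le_of_lt h')]
            exact hc k (by omega)
          · simp only [h', if_pos le_rfl, if_neg (by omega : ¬ (i + 1 ≤ i))]
            exact ⟨hciy, hg1'⟩
end
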